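/- Let φ : {2,3,…} → [0,∞) be a function such that {t ≥ 2 : φ(t) > 0} is unbounded. Then the set D_φ = {x ∈ (0,1] : Σₙ φ(dₙ(x)) = ∞} contains a dense G_δ subset of (0,1]; in particular D_φ is comeager in (0,1]. -/

import Mathlib

/-- The first Engel digit `d₁(x) = ⌊1/x⌋ + 1`. -/
noncomputable def engelD1 (x : ℝ) : ℕ := ⌊1 / x⌋₊ + 1

/-- The Engel map `T(x) = d₁(x)·x − 1`. -/
noncomputable def engelT (x : ℝ) : ℝ := (engelD1 x : ℝ) * x - 1

/-- The `n`-th Engel digit (0-indexed): `dₙ₊₁(x) = d₁(Tⁿ(x))`. -/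
noncomputable def engelDigit (x : ℝ) (n : ℕ) : ℕ := engelD1 (engelT^[n] x)

/-!
On a set where the first `m` Engel digits are fixed, `engelT^[m]` is affine with slope at least
`2 ^ m`. Hence points sharing their first `m` digits are `2⁻ᵐ`-close, and at an irrational point
the first `m` digits, and so the partial sums of `ψ (dₙ x)`, are locally constant. Given `a` and a
digit `t ≥ dₘ(a)` with `ψ t > 0`, inverting the branches of `engelT` produces irrational points
whose digits are those of `a` up to `m`, followed by a long run of `t`'s: they approximate `a`
and have arbitrarily large partial sums. So for every `N` the interior of
`{x | N < ∑_{n<m} ψ (dₙ x)}` (union over `m`) is open and dense in `(0, 1]`, and by Baire the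
intersection of these sets is a dense `G_δ` on which the series diverges.
-/

open Set Filter Topology

section EngelMap

variable {x y : ℝ} {d : ℕ}

lemma one_lt_engelD1_mul (hx : 0 < x) : 1 < engelD1 x * x := by
  have h := Nat.lt_floor_add_one (1 / x)
  rw [div_lt_iff₀ hx] at h
  simpa [engelD1] using h

lemma engelD1_sub_one_mul_le (hx : 0 < x) : (engelD1 x - 1) * x ≤ 1 := by
  have h := Nat.floor_le (one_div_pos.2 hx).le
  rw [le_div_iff₀ hx] at h
  simpa [engelD1] using h

lemma le_engelD1 (hx : 0 < x) (h : (d - 1) * x ≤ 1) : d ≤ engelD1 x := by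
  by_contra! hlt
  have hle : (engelD1 x : ℝ) ≤ d - 1 := by
    rw [le_sub_iff_add_le]; exact_mod_cast hlt
  nlinarith [one_lt_engelD1_mul hx]

lemma engelD1_le (hx : 0 < x) (h : 1 < d * x) : engelD1 x ≤ d := by
  by_contra! hlt
  have hle : (d : ℝ) ≤ engelD1 x - 1 := by
    rw [le_sub_iff_add_le]; exact_mod_cast hlt
  nlinarith [engelD1_sub_one_mul_le hx]

lemma engelD1_eq (hx : 0 < x) (h₁ : (d - 1) * x ≤ 1) (h₂ : 1 < d * x) : engelD1 x = d :=
  (engelD1_le hx h₂).antisymm (le_engelD1 hx h₁)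

lemma two_le_engelD1 (hx : x ∈ Ioc 0 1) : 2 ≤ engelD1 x :=
  le_engelD1 hx.1 (by norm_num; exact hx.2)

lemma engelT_pos (hx : 0 < x) : 0 < engelT x := by
  linarith [one_lt_engelD1_mul hx, show engelT x = engelD1 x * x - 1 from rfl]

lemma engelT_le_self (hx : 0 < x) : engelT x ≤ x := by
  linarith [engelD1_sub_one_mul_le hx, show engelT x = engelD1 x * x - 1 from rfl]

lemma mapsTo_engelT_Ioi : MapsTo engelT (Ioi 0) (Ioi 0) := fun _ hx ↦ engelT_pos hx

lemma mapsTo_engelT : MapsTo engelT (Ioc 0 1) (Ioc 0 1) := fun _ hx ↦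
  ⟨engelT_pos hx.1, (engelT_le_self hx.1).trans hx.2⟩

lemma engelD1_le_engelD1_engelT (hx : 0 < x) : engelD1 x ≤ engelD1 (engelT x) := by
  refine le_engelD1 (engelT_pos hx) ?_
  have hd : (1 : ℝ) ≤ engelD1 x := by exact_mod_cast (Nat.succ_pos _)
  nlinarith [engelT_le_self hx, engelD1_sub_one_mul_le hx]

lemma engelD1_add_one_div (hy : 0 < y) (hd : 1 ≤ d) (h : (d - 1) * y ≤ 1) :
    engelD1 ((y + 1) / d) = d := by
  have hd0 : (0 : ℝ) < d := by exact_mod_cast hd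
  refine engelD1_eq (by positivity) ?_ ?_
  · rw [mul_div_assoc', div_le_one hd0]; linarith
  · rw [mul_div_cancel₀ _ hd0.ne']; linarith

lemma engelT_add_one_div (hy : 0 < y) (hd : 1 ≤ d) (h : (d - 1) * y ≤ 1) :
    engelT ((y + 1) / d) = y := by
  have hd0 : (d : ℝ) ≠ 0 := by positivity
  rw [engelT, engelD1_add_one_div hy hd h, mul_div_cancel₀ _ hd0, add_sub_cancel_right]

end EngelMap

section Digits

variable {x : ℝ} {n m : ℕ}

lemma engelDigit_zero : engelDigit x 0 = engelD1 x := rfl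

lemma engelDigit_add : engelDigit x (n + m) = engelDigit (engelT^[m] x) n := by
  rw [engelDigit, engelDigit, Function.iterate_add_apply]

lemma engelDigit_succ : engelDigit x (n + 1) = engelDigit (engelT x) n :=
  engelDigit_add

lemma two_le_engelDigit (hx : x ∈ Ioc 0 1) (n : ℕ) : 2 ≤ engelDigit x n :=
  two_le_engelD1 (mapsTo_engelT.iterate n hx)

end Digits

lemma irrational_engelT_iff {x : ℝ} : Irrational (engelT x) ↔ Irrational x := by
  refine ⟨fun h ↦ ?_, fun h ↦ ?_⟩
  · rintro ⟨q, rfl⟩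
    exact h ⟨engelD1 q * q - 1, by simp [engelT]⟩
  · have := (h.natCast_mul (Nat.succ_ne_zero _ : engelD1 x ≠ 0)).sub_natCast 1
    rwa [Nat.cast_one] at this

lemma irrational_engelT_iterate_iff {x : ℝ} {n : ℕ} :
    Irrational (engelT^[n] x) ↔ Irrational x := by
  induction n with
  | zero => rfl
  | succ n ih => rw [Function.iterate_succ_apply', irrational_engelT_iff, ih]

/-- The last conjunct is the invariant that lets the next digit of `a` be prepended. -/
lemma exists_engelT_iterate_eq {a y : ℝ} (ha : a ∈ Ioc 0 1) (hy : y ∈ Ioc 0 1) (m : ℕ)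
    (h : engelDigit a m ≤ engelD1 y) :
    ∃ x ∈ Ioc 0 1, engelT^[m] x = y ∧ (∀ j < m, engelDigit x j = engelDigit a j) ∧
      engelD1 a ≤ engelD1 x := by
  induction m generalizing a with
  | zero => exact ⟨y, hy, rfl, fun j hj ↦ absurd hj j.not_lt_zero, h⟩
  | succ m ih =>
    rw [engelDigit_succ] at h
    obtain ⟨x', hx', hTx', hdig, hd⟩ := ih (mapsTo_engelT ha) h
    set d := engelD1 a
    have hd2 : 2 ≤ d := two_le_engelD1 ha
    have hd1 : 1 ≤ d := by omega
    have hdx' : ((d : ℝ) - 1) * x' ≤ 1 := by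
      have : (d : ℝ) ≤ engelD1 x' := by exact_mod_cast (engelD1_le_engelD1_engelT ha.1).trans hd
      nlinarith [engelD1_sub_one_mul_le hx'.1, hx'.1]
    have hdR : (2 : ℝ) ≤ d := by exact_mod_cast hd2
    have hD := engelD1_add_one_div hx'.1 hd1 hdx'
    have hT := engelT_add_one_div hx'.1 hd1 hdx'
    refine ⟨(x' + 1) / d, ⟨div_pos (by linarith [hx'.1]) (by positivity), ?_⟩, ?_, ?_, hD.ge⟩
    · rw [div_le_one (by positivity)]; linarith [hx'.2]
    · rw [Function.iterate_succ_apply, hT, hTx']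
    · rintro (_ | j) hj
      · exact hD
      · rw [engelDigit_succ, engelDigit_succ, hT]
        exact hdig j (by omega)

/-- Each branch of `engelT` expands distances by its digit, which is at least `2`. -/
lemma abs_sub_le_of_engelDigit_eq {x a : ℝ} (hx : x ∈ Ioc 0 1) (ha : a ∈ Ioc 0 1) {m : ℕ}
    (h : ∀ j < m, engelDigit x j = engelDigit a j) : |x - a| ≤ (1 / 2) ^ m := by
  induction m generalizing x a with
  | zero => rw [pow_zero, abs_le]; constructor <;> linarith [hx.1, hx.2, ha.1, ha.2]
  | succ m ih =>
    have hd : engelD1 x = engelD1 a := h 0 m.succ_pos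
    have hT : |engelT x - engelT a| ≤ (1 / 2) ^ m := ih (mapsTo_engelT hx) (mapsTo_engelT ha)
      fun j hj ↦ by simpa only [engelDigit_succ] using h (j + 1) (by omega)
    have hdR : (2 : ℝ) ≤ engelD1 x := by exact_mod_cast two_le_engelD1 hx
    have hsub : engelT x - engelT a = engelD1 x * (x - a) := by
      simp only [engelT, hd]; ring
    rw [hsub, abs_mul, Nat.abs_cast] at hT
    rw [pow_succ]
    nlinarith [abs_nonneg (x - a)]

lemma engelDigit_inv_sub_one {t : ℕ} (ht : 2 ≤ t) (n : ℕ) : engelDigit ((t : ℝ) - 1)⁻¹ n = t := by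
  have htR : (2 : ℝ) ≤ t := by exact_mod_cast ht
  have ht1 : (0 : ℝ) < t - 1 := by linarith
  have hp : (0 : ℝ) < ((t : ℝ) - 1)⁻¹ := inv_pos.2 ht1
  have hD : engelD1 ((t : ℝ) - 1)⁻¹ = t := by
    refine engelD1_eq hp (mul_inv_cancel₀ ht1.ne').le ?_
    rw [← div_eq_mul_inv, one_lt_div (by linarith)]; linarith
  have hfix : engelT ((t : ℝ) - 1)⁻¹ = ((t : ℝ) - 1)⁻¹ := by
    rw [engelT, hD]; field_simp [ht1.ne']; ring
  rw [engelDigit, Function.iterate_fixed hfix, hD]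

/-- The tail is built by lifting an irrational seed through the fixed point `(t - 1)⁻¹` of the
branch of `engelT` with digit `t`. -/
lemma exists_irrational_engelDigit_eq_append_const {a : ℝ} (ha : a ∈ Ioc 0 1) {m t : ℕ}
    (ht : 2 ≤ t) (hat : engelDigit a m ≤ t) (k : ℕ) :
    ∃ x ∈ Ioc 0 1, Irrational x ∧ (∀ j < m, engelDigit x j = engelDigit a j) ∧
      ∀ j < k, engelDigit x (m + j) = t := by
  have htR : (2 : ℝ) ≤ t := by exact_mod_cast ht
  have ht1 : (0 : ℝ) < t - 1 := by linarith
  have hp : ((t : ℝ) - 1)⁻¹ ∈ Ioc 0 1 := ⟨inv_pos.2 ht1, inv_le_one_of_one_le₀ (by linarith)⟩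
  obtain ⟨y₀, hy₀, hy₀pos, hy₀p⟩ := exists_irrational_btwn hp.1
  have hty₀ : t ≤ engelD1 y₀ := by
    refine le_engelD1 hy₀pos ?_
    calc ((t : ℝ) - 1) * y₀ ≤ (t - 1) * ((t : ℝ) - 1)⁻¹ := by gcongr
      _ = 1 := mul_inv_cancel₀ ht1.ne'
  obtain ⟨y, hy, hTy, hdigy, hDy⟩ := exists_engelT_iterate_eq hp ⟨hy₀pos, hy₀p.le.trans hp.2⟩ k
    (by rwa [engelDigit_inv_sub_one ht])
  rw [← engelDigit_zero, engelDigit_inv_sub_one ht] at hDy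
  obtain ⟨x, hx, hTx, hdigx, -⟩ := exists_engelT_iterate_eq ha hy m (hat.trans hDy)
  refine ⟨x, hx, ?_, hdigx, fun j hj ↦ ?_⟩
  · rw [← irrational_engelT_iterate_iff (n := m), hTx, ← irrational_engelT_iterate_iff (n := k),
      hTy]
    exact hy₀
  · rw [add_comm, engelDigit_add, hTx, hdigy j hj, engelDigit_inv_sub_one ht]

noncomputable def engelPartialSum (ψ : ℕ → ℝ) (x : ℝ) (m : ℕ) : ℝ :=
  ∑ n ∈ Finset.range m, ψ (engelDigit x n)

lemma exists_irrational_near_lt_engelPartialSum {ψ : ℕ → ℝ} (hnonneg : ∀ t, 2 ≤ t → 0 ≤ ψ t)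
    (hunbdd : ∀ M : ℕ, ∃ t, M ≤ t ∧ 2 ≤ t ∧ 0 < ψ t) {a ε : ℝ} (ha : a ∈ Ioc 0 1) (hε : 0 < ε)
    (N : ℝ) : ∃ x ∈ Ioc 0 1, Irrational x ∧ |x - a| < ε ∧ ∃ n, N < engelPartialSum ψ x n := by
  obtain ⟨m, hm⟩ := exists_pow_lt_of_lt_one hε (by norm_num : (1 / 2 : ℝ) < 1)
  obtain ⟨t, hat, ht, hψt⟩ := hunbdd (engelDigit a m)
  obtain ⟨k, hk⟩ := exists_nat_gt (N / ψ t)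
  obtain ⟨x, hx, hirr, hpre, htail⟩ := exists_irrational_engelDigit_eq_append_const ha ht hat k
  refine ⟨x, hx, hirr, (abs_sub_le_of_engelDigit_eq hx ha hpre).trans_lt hm, m + k, ?_⟩
  calc N < k * ψ t := by rwa [div_lt_iff₀ hψt] at hk
    _ = ∑ j ∈ Finset.range k, ψ (engelDigit x (m + j)) := by
      rw [Finset.sum_congr rfl fun j hj ↦ by rw [htail j (Finset.mem_range.1 hj)]]
      simp
    _ ≤ engelPartialSum ψ x (m + k) := by
      rw [engelPartialSum, Finset.sum_range_add]
      exact le_add_of_nonneg_left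
        (Finset.sum_nonneg fun n _ ↦ hnonneg _ (two_le_engelDigit hx n))

section LocalConstancy

variable {x : ℝ}

lemma eventually_engelD1_eq (hx : 0 < x) (hirr : Irrational x) :
    ∀ᶠ y in 𝓝 x, engelD1 y = engelD1 x := by
  set d := engelD1 x
  have hne : ((d : ℝ) - 1) * x ≠ 1 := fun h ↦
    hirr ⟨((d : ℚ) - 1)⁻¹, by rw [eq_inv_of_mul_eq_one_right h]; push_cast; rfl⟩
  have h₁ : ((d : ℝ) - 1) * x < 1 := (engelD1_sub_one_mul_le hx).lt_of_ne hne
  have h₂ : 1 < (d : ℝ) * x := one_lt_engelD1_mul hx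
  filter_upwards [eventually_gt_nhds hx,
    (continuousAt_const.mul continuousAt_id).eventually_lt continuousAt_const h₁,
    continuousAt_const.eventually_lt (continuousAt_const.mul continuousAt_id) h₂] with y hy hy₁ hy₂
  exact engelD1_eq hy hy₁.le hy₂

lemma continuousAt_engelT (hx : 0 < x) (hirr : Irrational x) : ContinuousAt engelT x :=
  ContinuousAt.congr (f := fun y ↦ (engelD1 x : ℝ) * y - 1) (by fun_prop) <| by
    filter_upwards [eventually_engelD1_eq hx hirr] with y hy
    simp [engelT, hy]

lemma continuousAt_engelT_iterate (hx : 0 < x) (hirr : Irrational x) (n : ℕ) :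
    ContinuousAt engelT^[n] x := by
  induction n with
  | zero => exact continuousAt_id
  | succ n ih =>
    rw [Function.iterate_succ']
    exact (continuousAt_engelT (mapsTo_engelT_Ioi.iterate n hx)
      (irrational_engelT_iterate_iff.2 hirr)).comp ih

lemma eventually_engelDigit_eq (hx : 0 < x) (hirr : Irrational x) (n : ℕ) :
    ∀ᶠ y in 𝓝 x, engelDigit y n = engelDigit x n :=
  (continuousAt_engelT_iterate hx hirr n).tendsto.eventually
    (eventually_engelD1_eq (mapsTo_engelT_Ioi.iterate n hx) (irrational_engelT_iterate_iff.2 hirr))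

lemma eventually_engelPartialSum_eq (hx : 0 < x) (hirr : Irrational x) (ψ : ℕ → ℝ) (m : ℕ) :
    ∀ᶠ y in 𝓝 x, engelPartialSum ψ y m = engelPartialSum ψ x m := by
  filter_upwards [(Filter.eventually_all_finset (Finset.range m)).2
    fun n _ ↦ eventually_engelDigit_eq hx hirr n] with y hy
  exact Finset.sum_congr rfl fun n hn ↦ by rw [hy n hn]

end LocalConstancy

instance : LocallyCompactSpace (Ioc (0 : ℝ) 1) :=
  isLocallyClosed_Ioc.locallyCompactSpace

/-- If `ψ : {2,3,…} → [0,∞)` has unbounded support, then the divergence set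
`D_ψ = {x ∈ (0,1] : Σₙ ψ(dₙ(x)) = ∞}` contains a dense `G_δ` subset of `(0,1]`;
in particular it is comeager in `(0,1]`. -/
theorem divergence_set_comeager (ψ : ℕ → ℝ)
    (hnonneg : ∀ t, 2 ≤ t → 0 ≤ ψ t)
    (hunbdd : ∀ M : ℕ, ∃ t, M ≤ t ∧ 2 ≤ t ∧ 0 < ψ t) :
    (∃ G : Set (Set.Ioc (0 : ℝ) 1), IsGδ G ∧ Dense G ∧
        ∀ x ∈ G, ¬ Summable (fun n : ℕ => ψ (engelDigit (x : ℝ) n))) ∧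
    IsMeagre {x : Set.Ioc (0 : ℝ) 1 | Summable fun n : ℕ => ψ (engelDigit (x : ℝ) n)} := by
  set U : ℕ → Set (Ioc (0 : ℝ) 1) := fun N ↦ ⋃ m, interior {x | N < engelPartialSum ψ x m}
  have hU : ∀ N, IsOpen (U N) := fun N ↦ isOpen_iUnion fun _ ↦ isOpen_interior
  have hUdense : ∀ N, Dense (U N) := by
    refine fun N ↦ Metric.dense_iff.2 fun a r hr ↦ ?_
    obtain ⟨x, hx, hirr, hxa, m, hm⟩ :=
      exists_irrational_near_lt_engelPartialSum hnonneg hunbdd a.2 hr N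
    refine ⟨⟨x, hx⟩, hxa, mem_iUnion.2 ⟨m, mem_interior_iff_mem_nhds.2 ?_⟩⟩
    filter_upwards [(continuous_subtype_val.tendsto _).eventually
      (eventually_engelPartialSum_eq hx.1 hirr ψ m)] with y hy
    rwa [hy]
  have hG : IsGδ (⋂ N, U N) := IsGδ.iInter_of_isOpen hU
  have hGdense : Dense (⋂ N, U N) := dense_iInter_of_isOpen_nat hU hUdense
  have hdiv : ∀ x ∈ ⋂ N, U N, ¬ Summable fun n ↦ ψ (engelDigit (x : ℝ) n) := by
    intro x hx hsum
    obtain ⟨N, hN⟩ := exists_nat_gt (∑' n, ψ (engelDigit x n))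
    obtain ⟨m, hm⟩ := mem_iUnion.1 (mem_iInter.1 hx N)
    have hle : engelPartialSum ψ x m ≤ ∑' n, ψ (engelDigit x n) :=
      hsum.sum_le_tsum _ fun n _ ↦ hnonneg _ (two_le_engelDigit x.2 n)
    exact (hN.trans ((interior_subset hm).trans_le hle)).false
  exact ⟨⟨_, hG, hGdense, hdiv⟩,
    mem_of_superset (residual_of_dense_Gδ hG hGdense) fun x hx ↦ hdiv x hx⟩
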